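/- Let ψ(x) := √(sech(x/99)). There is an absolute constant C such that for every real ϰ ≥ 1, every μ ∈ ℝ, and every integer ℓ with |ℓ| ≤ 24: (i) the kernel K(x,y) := ψ(x−μ)^ℓ ψ(y−μ)^{−ℓ} e^{ϰ(x−y)} 𝟙_{x<y} satisfies |K(x,y)| ≤ C e^{−ϰ|x−y|/2} for all x, y ∈ ℝ; and (ii) for every p ∈ [1, ∞] and every f ∈ L^p(ℝ), the function T f(x) := ψ(x−μ)^ℓ ∫_{x}^{∞} e^{ϰ(x−y)} ψ(y−μ)^{−ℓ} f(y) dy satisfies ‖T f‖_{L^p} ≤ C ϰ^{−1} ‖f‖_{L^p}. -/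

import Mathlib

/-!
`log cosh` is 1-Lipschitz, so the weight `ψ = (sech (· / 99))^{1/2}` satisfies
`ψ(x)^ℓ ψ(y)^{-ℓ} ≤ exp (|ℓ| |x - y| / 198) ≤ exp (|x - y| / 8)` for `|ℓ| ≤ 24`; for `ϰ ≥ 1`
this growth is absorbed by half of the decay `exp (ϰ (x - y))`, `x < y`, which gives (i).
Hence `|T f|` is dominated pointwise by the convolution of `|f|` with `exp (-ϰ |z| / 2)`,
a kernel of mass `4 / ϰ`, and (ii) is Young's inequality `‖F ⋆ k‖_p ≤ ‖k‖_1 ‖F‖_p`.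
-/

open MeasureTheory Real Set
open scoped ENNReal

namespace MeasureTheory

section Young

variable {G : Type*} [MeasurableSpace G] [AddCommGroup G] [MeasurableAdd₂ G] [MeasurableNeg G]
  {μ : Measure G} [μ.IsAddLeftInvariant]

lemma lintegral_lconvolution [SFinite μ] {F k : G → ℝ≥0∞} (hF : Measurable F) (hk : Measurable k) :
    ∫⁻ x, (F ⋆ₗ[μ] k) x ∂μ = (∫⁻ y, F y ∂μ) * ∫⁻ z, k z ∂μ := by
  simp_rw [lconvolution_def]
  rw [lintegral_lintegral_swap ((hF.comp measurable_snd).mul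
    (hk.comp (measurable_snd.neg.add measurable_fst))).aemeasurable, ← lintegral_mul_const _ hF]
  refine lintegral_congr fun y => ?_
  rw [lintegral_const_mul _ (by fun_prop : Measurable fun x => k (-y + x)),
    lintegral_add_left_eq_self]

variable [μ.IsNegInvariant]

lemma lintegral_comp_neg_add (k : G → ℝ≥0∞) (x : G) : ∫⁻ y, k (-y + x) ∂μ = ∫⁻ z, k z ∂μ := by
  simp_rw [neg_add_eq_sub, lintegral_sub_left_eq_self]

lemma lconvolution_rpow_le {F k : G → ℝ≥0∞} (hF : Measurable F) (hk : Measurable k) {p : ℝ}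
    (hp : 1 ≤ p) (x : G) :
    (F ⋆ₗ[μ] k) x ^ p ≤ (∫⁻ z, k z ∂μ) ^ (p - 1) * ((F · ^ p) ⋆ₗ[μ] k) x := by
  have hp₀ : 0 < p := by linarith
  have hq : 0 ≤ 1 - 1 / p := sub_nonneg.mpr ((div_le_one hp₀).mpr hp)
  have hkx : Measurable fun y => k (-y + x) := hk.comp (measurable_neg.add_const x)
  -- Hölder with exponents `1/p` and `1 - 1/p` applied to `(F ^ p * k) ^ (1/p) * k ^ (1 - 1/p)`
  have holder := ENNReal.lintegral_mul_norm_pow_le (μ := μ) (p := 1 / p)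
    ((hF.pow_const p).mul hkx).aemeasurable hkx.aemeasurable (by positivity) hq (by ring)
  have split : ∀ y, (F y ^ p * k (-y + x)) ^ (1 / p) * k (-y + x) ^ (1 - 1 / p)
      = F y * k (-y + x) := fun y => by
    rw [ENNReal.mul_rpow_of_nonneg _ _ (by positivity), ← ENNReal.rpow_mul,
      mul_one_div_cancel hp₀.ne', ENNReal.rpow_one, mul_assoc,
      ← ENNReal.rpow_add_of_nonneg _ _ (by positivity) hq, add_sub_cancel, ENNReal.rpow_one]
  simp only [Pi.mul_apply, split, lintegral_comp_neg_add] at holder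
  calc (F ⋆ₗ[μ] k) x ^ p
      ≤ (((F · ^ p) ⋆ₗ[μ] k) x ^ (1 / p) * (∫⁻ z, k z ∂μ) ^ (1 - 1 / p)) ^ p :=
        ENNReal.rpow_le_rpow holder hp₀.le
    _ = (∫⁻ z, k z ∂μ) ^ (p - 1) * ((F · ^ p) ⋆ₗ[μ] k) x := by
      rw [ENNReal.mul_rpow_of_nonneg _ _ hp₀.le, ← ENNReal.rpow_mul, ← ENNReal.rpow_mul,
        one_div_mul_cancel hp₀.ne', ENNReal.rpow_one, mul_comm, sub_mul,
        one_div_mul_cancel hp₀.ne', one_mul]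

lemma lintegral_lconvolution_rpow_le [SFinite μ] {F k : G → ℝ≥0∞} (hF : Measurable F)
    (hk : Measurable k) {p : ℝ} (hp : 1 ≤ p) :
    ∫⁻ x, (F ⋆ₗ[μ] k) x ^ p ∂μ ≤ (∫⁻ z, k z ∂μ) ^ p * ∫⁻ y, F y ^ p ∂μ := by
  set A := ∫⁻ z, k z ∂μ
  calc ∫⁻ x, (F ⋆ₗ[μ] k) x ^ p ∂μ ≤ ∫⁻ x, A ^ (p - 1) * ((F · ^ p) ⋆ₗ[μ] k) x ∂μ :=
        lintegral_mono (lconvolution_rpow_le hF hk hp)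
    _ = A ^ (p - 1) * ((∫⁻ y, F y ^ p ∂μ) * A) := by
      rw [lintegral_const_mul _ (measurable_lconvolution μ (hF.pow_const p) hk),
        lintegral_lconvolution (hF.pow_const p) hk]
    _ = A ^ p * ∫⁻ y, F y ^ p ∂μ := by
      rw [mul_comm _ A, ← mul_assoc]
      congr 1
      conv_rhs => rw [← sub_add_cancel p 1]
      rw [ENNReal.rpow_add_of_nonneg _ _ (sub_nonneg.mpr hp) zero_le_one, ENNReal.rpow_one]

theorem eLpNorm_lconvolution_le [SFinite μ] {F k : G → ℝ≥0∞} (hF : AEMeasurable F μ)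
    (hk : Measurable k) {p : ℝ≥0∞} (hp : 1 ≤ p) :
    eLpNorm (F ⋆ₗ[μ] k) p μ ≤ (∫⁻ z, k z ∂μ) * eLpNorm F p μ := by
  have hmk : F ⋆ₗ[μ] k = hF.mk F ⋆ₗ[μ] k := funext fun x =>
    lintegral_congr_ae (hF.ae_eq_mk.mono fun y hy => by simp only [hy])
  rw [hmk, eLpNorm_congr_ae hF.ae_eq_mk]
  generalize hF.mk F = F, hF.measurable_mk = hF
  rcases eq_or_ne p ∞ with rfl | hp_top
  · simp only [eLpNorm_exponent_top]
    refine eLpNormEssSup_le_of_ae_enorm_bound (ae_of_all _ fun x => ?_)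
    calc ‖(F ⋆ₗ[μ] k) x‖ₑ = ∫⁻ y, F y * k (-y + x) ∂μ := enorm_eq_self _
      _ ≤ ∫⁻ y, eLpNormEssSup F μ * k (-y + x) ∂μ := by
        refine lintegral_mono_ae ((enorm_ae_le_eLpNormEssSup F μ).mono fun y hy => ?_)
        exact mul_le_mul_left hy _
      _ = (∫⁻ z, k z ∂μ) * eLpNormEssSup F μ := by
        rw [lintegral_const_mul _ (by fun_prop), lintegral_comp_neg_add, mul_comm]
  · have hp₀ : p ≠ 0 := (zero_lt_one.trans_le hp).ne'
    have hp₁ : 1 ≤ p.toReal := by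
      simpa using ENNReal.toReal_mono hp_top hp
    simp only [eLpNorm_eq_lintegral_rpow_enorm_toReal hp₀ hp_top, enorm_eq_self]
    calc (∫⁻ x, (F ⋆ₗ[μ] k) x ^ p.toReal ∂μ) ^ (1 / p.toReal)
        ≤ ((∫⁻ z, k z ∂μ) ^ p.toReal * ∫⁻ y, F y ^ p.toReal ∂μ) ^ (1 / p.toReal) := by
          gcongr
          exact lintegral_lconvolution_rpow_le hF hk hp₁
      _ = (∫⁻ z, k z ∂μ) * (∫⁻ y, F y ^ p.toReal ∂μ) ^ (1 / p.toReal) := by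
        rw [ENNReal.mul_rpow_of_nonneg _ _ (by positivity), ← ENNReal.rpow_mul,
          mul_one_div_cancel (by positivity), ENNReal.rpow_one]

end Young

end MeasureTheory

namespace Real

lemma cosh_le_cosh_mul_exp_abs_sub (a b : ℝ) : cosh b ≤ cosh a * exp |b - a| := by
  have h₁ : exp b ≤ exp a * exp |b - a| := by
    rw [← exp_add, exp_le_exp]; linarith [le_abs_self (b - a)]
  have h₂ : exp (-b) ≤ exp (-a) * exp |b - a| := by
    rw [← exp_add, exp_le_exp]; linarith [neg_abs_le (b - a)]
  rw [cosh_eq, cosh_eq]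
  linarith

lemma abs_log_cosh_sub_log_cosh_le (a b : ℝ) : |log (cosh a) - log (cosh b)| ≤ |a - b| := by
  have key : ∀ a b : ℝ, log (cosh b) ≤ log (cosh a) + |b - a| := fun a b => by
    rw [← log_exp |b - a|, ← log_mul (cosh_pos a).ne' (exp_pos _).ne']
    exact log_le_log (cosh_pos b) (cosh_le_cosh_mul_exp_abs_sub a b)
  rw [abs_sub_le_iff]
  constructor
  · linarith [key b a]
  · linarith [key a b, abs_sub_comm a b]

lemma log_sqrt_one_div_cosh (t : ℝ) : log √(1 / cosh t) = -log (cosh t) / 2 := by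
  rw [log_sqrt (by positivity), one_div, log_inv]

lemma lintegral_ofReal_exp_neg_mul_abs {c : ℝ} (hc : 0 < c) :
    ∫⁻ z, ENNReal.ofReal (exp (-(c * |z|))) = ENNReal.ofReal (2 / c) := by
  have hIoi : IntegrableOn (fun z : ℝ => exp (-(c * |z|))) (Ioi 0) :=
    (integrableOn_exp_mul_Ioi (neg_neg_of_pos hc) 0).congr_fun
      (fun z hz => by simp only [abs_of_pos (mem_Ioi.mp hz), neg_mul]) measurableSet_Ioi
  have hIio : IntegrableOn (fun z : ℝ => exp (-(c * |z|))) (Iio 0) := by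
    have := (neg_zero (G := ℝ) ▸ hIoi).comp_neg_Iio (c := (0 : ℝ))
    simpa only [abs_neg] using this
  have hint : Integrable (fun z : ℝ => exp (-(c * |z|))) := by
    rw [← integrableOn_univ, ← Iio_union_Ici (a := (0:ℝ))]
    exact hIio.union ((integrableOn_Ici_iff_integrableOn_Ioi).mpr hIoi)
  rw [← ofReal_integral_eq_lintegral_ofReal hint (ae_of_all _ fun _ => (exp_pos _).le),
    integral_comp_abs (f := fun t => exp (-(c * t)))]
  simp_rw [← neg_mul]
  rw [integral_exp_mul_Ioi (neg_neg_of_pos hc), mul_zero, exp_zero]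
  congr 1
  field_simp

end Real

lemma zpow_mul_zpow_neg_le_exp {u v : ℝ} (hu : 0 < u) (hv : 0 < v) (ℓ : ℤ) :
    u ^ ℓ * v ^ (-ℓ) ≤ exp (|(ℓ : ℝ)| * |log u - log v|) := by
  have h : u ^ ℓ * v ^ (-ℓ) = exp (ℓ * (log u - log v)) := by
    rw [mul_sub, exp_sub, ← log_zpow, ← log_zpow, exp_log (zpow_pos hu ℓ),
      exp_log (zpow_pos hv ℓ), zpow_neg, div_eq_mul_inv]
  rw [h, exp_le_exp, ← abs_mul]
  exact le_abs_self _

lemma sqrt_sech_zpow_mul_zpow_neg_le (a b : ℝ) (ℓ : ℤ) :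
    √(1 / cosh a) ^ ℓ * √(1 / cosh b) ^ (-ℓ) ≤ exp (|(ℓ : ℝ)| * |a - b| / 2) := by
  have hpos : ∀ t, 0 < √(1 / cosh t) := fun t => by positivity
  refine (zpow_mul_zpow_neg_le_exp (hpos a) (hpos b) ℓ).trans (exp_le_exp.mpr ?_)
  have h : |log √(1 / cosh a) - log √(1 / cosh b)| = |log (cosh b) - log (cosh a)| / 2 := by
    rw [log_sqrt_one_div_cosh, log_sqrt_one_div_cosh,
      show -log (cosh a) / 2 - -log (cosh b) / 2 = (log (cosh b) - log (cosh a)) / 2 by ring,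
      abs_div, abs_two]
  have hab : |log (cosh b) - log (cosh a)| ≤ |a - b| := by
    rw [abs_sub_comm a b]; exact abs_log_cosh_sub_log_cosh_le b a
  rw [h, mul_div_assoc']
  exact div_le_div_of_nonneg_right (mul_le_mul_of_nonneg_left hab (abs_nonneg _)) zero_le_two

lemma sqrt_sech_kernel_le {ϰ : ℝ} (hϰ : 1 ≤ ϰ) (μ : ℝ) {ℓ : ℤ} (hℓ : |ℓ| ≤ 24) {x y : ℝ}
    (hxy : x ≤ y) :
    √(1 / cosh ((x - μ) / 99)) ^ ℓ * √(1 / cosh ((y - μ) / 99)) ^ (-ℓ) * exp (ϰ * (x - y))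
      ≤ exp (-(ϰ * |x - y|) / 2) := by
  have hd : |(x - μ) / 99 - (y - μ) / 99| = |x - y| / 99 := by
    rw [← sub_div, sub_sub_sub_cancel_right, abs_div, abs_of_pos (by norm_num : (0:ℝ) < 99)]
  have hw := sqrt_sech_zpow_mul_zpow_neg_le ((x - μ) / 99) ((y - μ) / 99) ℓ
  rw [hd] at hw
  have hℓ' : |(ℓ : ℝ)| ≤ 24 := by rw [← Int.cast_abs]; exact_mod_cast hℓ
  have hdecay : ϰ * (x - y) = -(ϰ * |x - y|) := by rw [abs_of_nonpos (sub_nonpos.mpr hxy)]; ring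
  calc _ ≤ exp (|(ℓ : ℝ)| * (|x - y| / 99) / 2) * exp (ϰ * (x - y)) := by gcongr
    _ = exp (|(ℓ : ℝ)| * (|x - y| / 99) / 2 - ϰ * |x - y|) := by
      rw [← exp_add, hdecay, ← sub_eq_add_neg]
    _ ≤ exp (-(ϰ * |x - y|) / 2) := by
      gcongr
      nlinarith [abs_nonneg (x - y), abs_nonneg (ℓ : ℝ)]

lemma abs_sqrt_sech_kernel_le {ϰ : ℝ} (hϰ : 1 ≤ ϰ) (μ : ℝ) {ℓ : ℤ} (hℓ : |ℓ| ≤ 24) (x y : ℝ) :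
    |√(1 / cosh ((x - μ) / 99)) ^ ℓ * √(1 / cosh ((y - μ) / 99)) ^ (-ℓ) * exp (ϰ * (x - y))
        * (if x < y then (1 : ℝ) else 0)| ≤ exp (-(ϰ * |x - y|) / 2) := by
  split_ifs with hxy
  · rw [mul_one, abs_of_pos (by positivity)]
    exact sqrt_sech_kernel_le hϰ μ hℓ hxy.le
  · rw [mul_zero, abs_zero]
    positivity

lemma Complex.enorm_ofReal (u : ℝ) : ‖(u : ℂ)‖ₑ = ‖u‖ₑ := by
  rw [← enorm_norm, Complex.norm_real, enorm_norm]

lemma enorm_ofReal_mul_setIntegral_le {α : Type*} [MeasurableSpace α] {μ : Measure α}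
    (s : Set α) (u : ℝ) (a : α → ℝ) (f : α → ℂ) :
    ‖(u : ℂ) * ∫ y in s, (a y : ℂ) * f y ∂μ‖ₑ ≤ ∫⁻ y in s, ‖u * a y‖ₑ * ‖f y‖ₑ ∂μ := by
  calc ‖(u : ℂ) * ∫ y in s, (a y : ℂ) * f y ∂μ‖ₑ
      ≤ ‖u‖ₑ * ∫⁻ y in s, ‖a y‖ₑ * ‖f y‖ₑ ∂μ := by
        rw [enorm_mul, Complex.enorm_ofReal]
        gcongr
        refine (enorm_integral_le_lintegral_enorm _).trans_eq ?_
        simp only [enorm_mul, Complex.enorm_ofReal]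
    _ = ∫⁻ y in s, ‖u * a y‖ₑ * ‖f y‖ₑ ∂μ := by
        rw [← lintegral_const_mul' _ _ enorm_ne_top]
        simp only [enorm_mul, mul_assoc]

lemma enorm_sqrt_sech_resolvent_le {ϰ : ℝ} (hϰ : 1 ≤ ϰ) (μ : ℝ) {ℓ : ℤ} (hℓ : |ℓ| ≤ 24)
    (f : ℝ → ℂ) (x : ℝ) :
    ‖((√(1 / cosh ((x - μ) / 99)) ^ ℓ : ℝ) : ℂ)
        * ∫ y in Ioi x, ((exp (ϰ * (x - y)) * √(1 / cosh ((y - μ) / 99)) ^ (-ℓ) : ℝ) : ℂ) * f y‖ₑ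
      ≤ ((‖f ·‖ₑ) ⋆ₗ fun z => ENNReal.ofReal (exp (-(ϰ * |z|) / 2))) x := by
  refine (enorm_ofReal_mul_setIntegral_le _ _ _ f).trans <|
    (setLIntegral_mono' measurableSet_Ioi fun y hy => ?_).trans (setLIntegral_le_lintegral _ _)
  rw [mul_comm (‖f y‖ₑ), neg_add_eq_sub, Real.enorm_eq_ofReal_abs]
  gcongr ?_ * _
  refine ENNReal.ofReal_le_ofReal ?_
  have := abs_sqrt_sech_kernel_le hϰ μ hℓ x y
  rwa [if_pos (mem_Ioi.mp hy), mul_one, mul_assoc, mul_comm (_ ^ (-ℓ))] at this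

/-- **Conjugated resolvent bounds.** With `ψ(x) = √(sech(x/99))`, there is an
absolute constant `C` so that for all `ϰ ≥ 1`, `μ ∈ ℝ`, and integer `|ℓ| ≤ 24`:
(i) the kernel `K(x,y) = ψ(x-μ)^ℓ ψ(y-μ)^{-ℓ} e^{ϰ(x-y)} 𝟙_{x<y}` satisfies
`|K(x,y)| ≤ C e^{-ϰ|x-y|/2}`; (ii) for all `p ∈ [1,∞]` and `f ∈ L^p`, the operator
`Tf(x) = ψ(x-μ)^ℓ ∫_x^∞ e^{ϰ(x-y)} ψ(y-μ)^{-ℓ} f(y) dy` satisfies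
`‖Tf‖_{L^p} ≤ C ϰ^{-1} ‖f‖_{L^p}`. -/
theorem stmt_15 :
    ∃ C : ℝ, 0 < C ∧
      ∀ ϰ : ℝ, 1 ≤ ϰ → ∀ μ : ℝ, ∀ ℓ : ℤ, |ℓ| ≤ 24 →
        (∀ x y : ℝ,
          |Real.sqrt (1 / Real.cosh ((x - μ) / 99)) ^ ℓ
              * Real.sqrt (1 / Real.cosh ((y - μ) / 99)) ^ (-ℓ)
              * Real.exp (ϰ * (x - y)) * (if x < y then (1 : ℝ) else 0)|
            ≤ C * Real.exp (-(ϰ * |x - y|) / 2)) ∧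
        (∀ p : ENNReal, 1 ≤ p → ∀ f : ℝ → ℂ, MemLp f p (volume : Measure ℝ) →
          eLpNorm
              (fun x =>
                ((Real.sqrt (1 / Real.cosh ((x - μ) / 99)) ^ ℓ : ℝ) : ℂ)
                  * ∫ y in Set.Ioi x,
                      ((Real.exp (ϰ * (x - y))
                          * Real.sqrt (1 / Real.cosh ((y - μ) / 99)) ^ (-ℓ) : ℝ) : ℂ)
                        * f y)
              p (volume : Measure ℝ)
            ≤ ENNReal.ofReal (C / ϰ) * eLpNorm f p (volume : Measure ℝ)) := by
  refine ⟨4, by norm_num, fun ϰ hϰ μ ℓ hℓ => ⟨fun x y => ?_, fun p hp f hf => ?_⟩⟩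
  · exact (abs_sqrt_sech_kernel_le hϰ μ hℓ x y).trans
      (le_mul_of_one_le_left (exp_pos _).le (by norm_num))
  set k : ℝ → ℝ≥0∞ := fun z => ENNReal.ofReal (exp (-(ϰ * |z|) / 2))
  have hk : Measurable k := by fun_prop
  have hk_int : ∫⁻ z, k z = ENNReal.ofReal (4 / ϰ) := by
    have h := lintegral_ofReal_exp_neg_mul_abs (half_pos (zero_lt_one.trans_le hϰ))
    rw [show 2 / (ϰ / 2) = 4 / ϰ by ring] at h
    refine (lintegral_congr fun z => ?_).trans h
    rw [div_mul_eq_mul_div, ← neg_div]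
  calc _ ≤ eLpNorm ((‖f ·‖ₑ) ⋆ₗ k) p volume := eLpNorm_mono_enorm fun x =>
        (enorm_sqrt_sech_resolvent_le hϰ μ hℓ f x).trans_eq (enorm_eq_self _).symm
    _ ≤ (∫⁻ z, k z) * eLpNorm (‖f ·‖ₑ) p volume := eLpNorm_lconvolution_le hf.1.enorm hk hp
    _ = ENNReal.ofReal (4 / ϰ) * eLpNorm f p volume := by rw [hk_int, eLpNorm_enorm]
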